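/- For every real number γ with 0 < γ ≤ 2 and every integer m ≥ 1, the m×m real symmetric Toeplitz matrix B_x^{γ} with entries (B_x^{γ})_{i,j} = ω_{|i−j|}^{(γ)} for i, j = 1, ..., m is positive definite. -/

import Mathlib

/-!
The recurrence `(γ/2 + k + 1) ω_{k+1} = (k - γ/2) ω_k` shows that for `0 < γ ≤ 2` the
coefficient `ω_0` is positive, `ω_1` is negative and all `ω_k` with `k ≥ 1` are nonpositive;
telescoping it gives `γ ∑_{|k| ≤ N} ω_k = -(2N + 2 + γ) ω_{N+1} ≥ 0`. Hence every row sum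
`r_i` of the Toeplitz matrix is a sum of two such symmetric partial sums, so `r_i ≥ 0`, and
`r_0 ≥ ω_0 / 2 > 0`. For a symmetric matrix `xᵀ B x = ∑ r_i x_i² - ½ ∑ b_ij (x_i - x_j)²`; both
parts are nonnegative, and they vanish only if `x_0 = 0` and `x_i = x_{i+1}` for all `i`
(as `b_{i,i+1} = ω_1 < 0`), i.e. only if `x = 0`.
-/

open Real Matrix

/-- Fractional centered difference coefficients
`ω_k^{(γ)} = (−1)^k Γ(γ+1) / (Γ(γ/2 − k + 1) Γ(γ/2 + k + 1))`. -/
noncomputable def fracCenteredCoeff (γ : ℝ) (k : ℤ) : ℝ :=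
  (-1 : ℝ) ^ k * Real.Gamma (γ + 1) /
    (Real.Gamma (γ / 2 - k + 1) * Real.Gamma (γ / 2 + k + 1))

open Finset

/- Mathlib's `Gamma` vanishes at its poles, so `(Gamma s)⁻¹` is the entire function `1/Γ` and
satisfies the functional equation without side conditions. -/
theorem Real.inv_Gamma_eq_mul_inv_Gamma_add_one (s : ℝ) :
    (Gamma s)⁻¹ = s * (Gamma (s + 1))⁻¹ := by
  rcases eq_or_ne s 0 with rfl | hs
  · simp
  · rw [Gamma_add_one hs, mul_inv, mul_inv_cancel_left₀ hs]

theorem fracCenteredCoeff_add_one (γ : ℝ) (k : ℤ) :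
    (γ / 2 + k + 1) * fracCenteredCoeff γ (k + 1) = (k - γ / 2) * fracCenteredCoeff γ k := by
  have hlow := Real.inv_Gamma_eq_mul_inv_Gamma_add_one (γ / 2 - k)
  have hup := Real.inv_Gamma_eq_mul_inv_Gamma_add_one (γ / 2 + k + 1)
  simp only [fracCenteredCoeff, Int.cast_add, Int.cast_one]
  rw [show γ / 2 - (k + 1) + 1 = γ / 2 - k by ring,
    show γ / 2 + (k + 1) + 1 = γ / 2 + k + 1 + 1 by ring]
  set d := γ / 2
  simp only [div_eq_mul_inv, mul_inv, zpow_add_one₀ (by norm_num : (-1 : ℝ) ≠ 0), hlow, hup]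
  ring

section

variable {γ : ℝ}

theorem fracCenteredCoeff_zero_pos (hγ : -1 < γ) : 0 < fracCenteredCoeff γ 0 := by
  have h1 : 0 < Gamma (γ + 1) := Gamma_pos_of_pos (by linarith)
  have h2 : 0 < Gamma (γ / 2 + 1) := Gamma_pos_of_pos (by linarith)
  simp only [fracCenteredCoeff, zpow_zero, Int.cast_zero, sub_zero, add_zero]
  positivity

theorem fracCenteredCoeff_one_neg (hγ : 0 < γ) : fracCenteredCoeff γ 1 < 0 := by
  have h := fracCenteredCoeff_add_one γ 0
  have h0 := fracCenteredCoeff_zero_pos (γ := γ) (by linarith)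
  norm_num at h
  nlinarith

theorem fracCenteredCoeff_nonpos (hγ0 : 0 < γ) (hγ2 : γ ≤ 2) {k : ℕ} (hk : 1 ≤ k) :
    fracCenteredCoeff γ k ≤ 0 := by
  induction k, hk using Nat.le_induction with
  | base => exact_mod_cast (fracCenteredCoeff_one_neg hγ0).le
  | succ k hk ih =>
    have h := fracCenteredCoeff_add_one γ k
    have hk' : (1 : ℝ) ≤ k := by exact_mod_cast hk
    push_cast at h ⊢
    nlinarith

/- `2 ∑_{k ≤ N} ω_k - ω_0 = ∑_{|k| ≤ N} ω_k`, the symmetric partial sum of the coefficients,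
which thus has the sign opposite to `ω_{N+1}`. -/
theorem mul_sum_range_fracCenteredCoeff (γ : ℝ) (N : ℕ) :
    γ * (2 * ∑ k ∈ range (N + 1), fracCenteredCoeff γ k - fracCenteredCoeff γ 0) =
      -(2 * N + 2 + γ) * fracCenteredCoeff γ (N + 1) := by
  induction N with
  | zero =>
    have h := fracCenteredCoeff_add_one γ 0
    norm_num at h ⊢
    linarith
  | succ N ih =>
    have h := fracCenteredCoeff_add_one γ (N + 1)
    rw [sum_range_succ]
    push_cast at h ⊢
    linarith

theorem half_fracCenteredCoeff_zero_le_sum_range (hγ0 : 0 < γ) (hγ2 : γ ≤ 2) {N : ℕ} (hN : 0 < N) :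
    fracCenteredCoeff γ 0 / 2 ≤ ∑ k ∈ range N, fracCenteredCoeff γ k := by
  obtain ⟨N, rfl⟩ := Nat.exists_eq_add_of_lt hN
  have h := mul_sum_range_fracCenteredCoeff γ N
  have hneg := fracCenteredCoeff_nonpos hγ0 hγ2 (Nat.le_add_left 1 N)
  push_cast at hneg
  simp only [zero_add] at h ⊢
  nlinarith

end

theorem Finset.sum_range_abs_sub {M : Type*} [AddCommGroup M] (f : ℤ → M) {i m : ℕ} (hi : i < m) :
    ∑ j ∈ range m, f |(i : ℤ) - j| = ∑ k ∈ range (i + 1), f k + ∑ k ∈ range (m - i), f k - f 0 := by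
  have hlow : ∑ j ∈ range (i + 1), f |(i : ℤ) - j| = ∑ k ∈ range (i + 1), f k := by
    rw [← sum_range_reflect]
    refine sum_congr rfl fun j hj => ?_
    rw [mem_range] at hj
    congr 1
    rw [abs_eq (by positivity)]
    omega
  have hup : ∑ j ∈ Ico (i + 1) m, f |(i : ℤ) - j| = ∑ k ∈ range (m - i - 1), f (k + 1 : ℕ) := by
    rw [sum_Ico_eq_sum_range, Nat.sub_sub]
    refine sum_congr rfl fun j _ => ?_
    congr 1
    rw [abs_eq (by positivity)]
    omega
  rw [← sum_range_add_sum_Ico _ hi, hlow, hup, ← Nat.sub_add_cancel (Nat.sub_pos_of_lt hi),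
    sum_range_succ' _ (m - i - 1), Nat.cast_zero]
  abel

theorem Matrix.two_mul_dotProduct_mulVec_self {n R : Type*} [Fintype n] [CommRing R]
    {A : Matrix n n R} (hA : A.IsSymm) (x : n → R) :
    2 * (x ⬝ᵥ A *ᵥ x) =
      2 * ∑ i, x i ^ 2 * ∑ j, A i j - ∑ i, ∑ j, A i j * (x i - x j) ^ 2 := by
  have hswap : ∑ i, ∑ j, A i j * x j ^ 2 = ∑ i, x i ^ 2 * ∑ j, A i j := by
    rw [sum_comm]
    refine sum_congr rfl fun i _ => ?_
    rw [mul_sum]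
    exact sum_congr rfl fun j _ => by rw [hA.apply]; ring
  have hexpand : ∑ i, ∑ j, A i j * (x i - x j) ^ 2 =
      ∑ i, x i ^ 2 * ∑ j, A i j + ∑ i, ∑ j, A i j * x j ^ 2 - 2 * (x ⬝ᵥ A *ᵥ x) := by
    simp only [dotProduct, mulVec, mul_sum, ← sum_add_distrib, ← sum_sub_distrib]
    exact sum_congr rfl fun i _ => sum_congr rfl fun j _ => by ring
  rw [hexpand, hswap]
  ring

theorem Fin.apply_eq_apply_of_forall_castSucc_eq_succ {n : ℕ} {α : Type*} {x : Fin (n + 1) → α}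
    (hchain : ∀ i : Fin n, x i.castSucc = x i.succ) (i j : Fin (n + 1)) : x i = x j := by
  have hzero : ∀ i, x i = x 0 := fun i => by
    induction i using Fin.induction with
    | zero => rfl
    | succ i ih => rw [← hchain, ih]
  rw [hzero i, hzero j]

theorem Matrix.posDef_of_offDiag_nonpos {n : ℕ} {A : Matrix (Fin (n + 1)) (Fin (n + 1)) ℝ}
    (hA : A.IsSymm) (hoff : ∀ i j, i ≠ j → A i j ≤ 0) (hrow : ∀ i, 0 ≤ ∑ j, A i j)
    {i₀ : Fin (n + 1)} (hi₀ : 0 < ∑ j, A i₀ j) (hchain : ∀ i : Fin n, A i.castSucc i.succ < 0) :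
    A.PosDef := by
  refine posDef_iff_dotProduct_mulVec.2 ⟨isHermitian_iff_isSymm.2 hA, fun x hx => ?_⟩
  have hterm : ∀ i j, A i j * (x i - x j) ^ 2 ≤ 0 := fun i j => by
    rcases eq_or_ne i j with rfl | hij
    · simp
    · exact mul_nonpos_of_nonpos_of_nonneg (hoff i j hij) (sq_nonneg _)
  have hdiag : 0 ≤ ∑ i, x i ^ 2 * ∑ j, A i j :=
    sum_nonneg fun i _ => mul_nonneg (sq_nonneg _) (hrow i)
  have hlap : ∑ i, ∑ j, A i j * (x i - x j) ^ 2 ≤ 0 :=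
    sum_nonpos fun i _ => sum_nonpos fun j _ => hterm i j
  suffices 0 < ∑ i, x i ^ 2 * ∑ j, A i j ∨ ∑ i, ∑ j, A i j * (x i - x j) ^ 2 < 0 by
    have h := two_mul_dotProduct_mulVec_self hA x
    rw [star_trivial]
    rcases this with h' | h' <;> linarith
  by_contra! hzero
  have hdiag_term : x i₀ ^ 2 * ∑ j, A i₀ j = 0 :=
    (sum_eq_zero_iff_of_nonneg fun i _ => mul_nonneg (sq_nonneg _) (hrow i)).1
      (hzero.1.antisymm hdiag) i₀ (mem_univ _)
  have hlap_term : ∀ i j, A i j * (x i - x j) ^ 2 = 0 := fun i j =>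
    (sum_eq_zero_iff_of_nonpos fun j _ => hterm i j).1
      ((sum_eq_zero_iff_of_nonpos fun i _ => sum_nonpos fun j _ => hterm i j).1
        (hlap.antisymm hzero.2) i (mem_univ _)) j (mem_univ _)
  have hconst : ∀ i j, x i = x j := Fin.apply_eq_apply_of_forall_castSucc_eq_succ fun i => by
    simpa [sub_eq_zero, (hchain i).ne] using hlap_term i.castSucc i.succ
  have hx₀ : x i₀ = 0 := by simpa [hi₀.ne'] using hdiag_term
  exact hx (funext fun i => (hconst i i₀).trans hx₀)

theorem stmt_8 (γ : ℝ) (hγ0 : 0 < γ) (hγ2 : γ ≤ 2) (m : ℕ) (hm : 1 ≤ m)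
    (B : Matrix (Fin m) (Fin m) ℝ)
    (hB : ∀ i j : Fin m, B i j = fracCenteredCoeff γ |(i : ℤ) - (j : ℤ)|) :
    B.PosDef := by
  obtain ⟨n, rfl⟩ := Nat.exists_eq_add_of_le' hm
  have hhalf {N : ℕ} (hN : 0 < N) := half_fracCenteredCoeff_zero_le_sum_range hγ0 hγ2 hN
  have hrow (i : Fin (n + 1)) : ∑ j, B i j =
      (∑ k ∈ range (i + 1), fracCenteredCoeff γ k - fracCenteredCoeff γ 0 / 2) +
        (∑ k ∈ range (n + 1 - i), fracCenteredCoeff γ k - fracCenteredCoeff γ 0 / 2) := by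
    rw [Fintype.sum_congr _ _ (hB i),
      Fin.sum_univ_eq_sum_range (fun j => fracCenteredCoeff γ |(i : ℤ) - j|),
      sum_range_abs_sub _ i.isLt]
    ring
  refine Matrix.posDef_of_offDiag_nonpos (i₀ := 0) ?_ (fun i j hij => ?_) (fun i => ?_) ?_
    (fun i => ?_)
  · exact IsSymm.ext fun i j => by rw [hB, hB, abs_sub_comm]
  · rw [hB, ← Int.natCast_natAbs]
    exact fracCenteredCoeff_nonpos hγ0 hγ2 (by omega)
  · rw [hrow]
    linarith [hhalf (N := i + 1) (by omega), hhalf (N := n + 1 - i) (by omega)]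
  · rw [hrow, Fin.val_zero, zero_add, range_one, sum_singleton, Nat.sub_zero]
    linarith [hhalf (N := n + 1) (by omega), fracCenteredCoeff_zero_pos (γ := γ) (by linarith)]
  · rw [hB]
    simp [fracCenteredCoeff_one_neg hγ0]
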